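/- Let R be a commutative ring with unity having no non-trivial idempotent and such that the clean graph Cl(R) is not a complete graph. Then the strong resolving graph of Cl(R) is the disjoint union of two complete graphs, each on |U(R)| vertices: one on the vertex set {(0,u) : u ∈ U(R)} and one on {(1,u) : u ∈ U(R)}. Moreover, V(Cl(R)) equals the vertex set of the strong resolving graph of Cl(R). -/

import Mathlib

variable {V : Type*}

/-- In a graph `G`, `u` is maximally distant from `v` if `d(v,w) ≤ d(u,v)` for every
neighbour `w` of `u`. -/
def IsMaxDistFrom (G : SimpleGraph V) (u v : V) : Prop :=
  ∀ w ∈ G.neighborSet u, G.dist v w ≤ G.dist u v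

/-- `u` and `v` are mutually maximally distant in `G`. -/
def IsMMD (G : SimpleGraph V) (u v : V) : Prop :=
  IsMaxDistFrom G u v ∧ IsMaxDistFrom G v u

/-- The boundary of a graph: the set of vertices that are mutually maximally distant
from some other vertex.  This is the vertex set of the strong resolving graph. -/
def graphBoundary (G : SimpleGraph V) : Set V :=
  {u | ∃ v, u ≠ v ∧ IsMMD G u v}

/-- The strong resolving graph, realised on the full vertex set (vertices outside the
boundary are isolated): two distinct vertices are adjacent iff they are mutually
maximally distant. -/
def srGraph (G : SimpleGraph V) : SimpleGraph V where
  Adj u v := u ≠ v ∧ IsMMD G u v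
  symm := ⟨fun u v h => ⟨h.1.symm, h.2.2, h.2.1⟩⟩
  loopless := ⟨fun u h => h.1 rfl⟩

/-- The independence number of a graph: the largest cardinality of a finite set of
pairwise non-adjacent vertices. -/
noncomputable def indNum (G : SimpleGraph V) : ℕ :=
  sSup {n | ∃ s : Finset V, ((s : Set V).Pairwise fun a b => ¬ G.Adj a b) ∧ s.card = n}

/-- `S` is a strong resolving set of `G`: every pair of distinct vertices `u, v` is
strongly resolved by some `w ∈ S`, i.e. `v` lies on a shortest `u`-`w` path or `u` lies
on a shortest `v`-`w` path. -/
def IsStrongResolvingSet (G : SimpleGraph V) (S : Set V) : Prop :=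
  ∀ u v : V, u ≠ v → ∃ w ∈ S,
    G.dist u w = G.dist u v + G.dist v w ∨ G.dist v w = G.dist v u + G.dist u w

/-- The strong metric dimension of a graph: the smallest cardinality of a (finite)
strong resolving set. -/
noncomputable def sdim (G : SimpleGraph V) : ℕ :=
  sInf {n | ∃ S : Finset V, IsStrongResolvingSet G (S : Set V) ∧ S.card = n}

/-- Vertices of the clean graph: pairs `(e, u)` with `e` an idempotent and `u` a unit. -/
abbrev CleanVtx (R : Type*) [CommRing R] : Type _ := {e : R // IsIdempotentElem e} × Rˣ

/-- The clean graph `Cl(R)` of a commutative ring `R`: distinct vertices `(e,u)`, `(f,v)`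
are adjacent iff `e * f = 0` or `u * v = 1`. -/
def cleanGraph (R : Type*) [CommRing R] : SimpleGraph (CleanVtx R) where
  Adj x y := x ≠ y ∧ ((x.1 : R) * (y.1 : R) = 0 ∨ (x.2 : R) * (y.2 : R) = 1)
  symm := by
    constructor
    rintro x y ⟨hxy, h | h⟩
    · exact ⟨hxy.symm, Or.inl (by rwa [mul_comm])⟩
    · exact ⟨hxy.symm, Or.inr (by rwa [mul_comm])⟩
  loopless := ⟨fun x h => h.1 rfl⟩

/-- The vertex set of `Cl₂(R)`: clean vertices `(e,u)` with `e ≠ 0`. -/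
def clean2Set (R : Type*) [CommRing R] : Set (CleanVtx R) := {x | (x.1 : R) ≠ 0}

/-- `Cl₂(R)`, the subgraph of `Cl(R)` induced on the vertices `(e,u)` with `e ≠ 0`. -/
def clean2Graph (R : Type*) [CommRing R] : SimpleGraph (clean2Set R) :=
  SimpleGraph.induce (clean2Set R) (cleanGraph R)

/-- `U''(R)`: the set of units `u` with `u² ≠ 1`. -/
def uSecond (R : Type*) [CommRing R] : Set Rˣ := {u | (u : R) * (u : R) ≠ 1}

/-- `|Id(R)*|`: the number of non-trivial idempotents of `R`. -/
noncomputable def idStarNum (R : Type*) [CommRing R] : ℕ :=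
  {e : R | IsIdempotentElem e ∧ e ≠ 0 ∧ e ≠ 1}.ncard

/-- `|Id⊥(R)*|`: the maximum cardinality of a set of nonzero pairwise orthogonal
idempotents of `R`. -/
noncomputable def orthIdemNum (R : Type*) [CommRing R] : ℕ :=
  sSup {n | ∃ s : Finset R, (∀ e ∈ s, IsIdempotentElem e ∧ e ≠ 0) ∧
    ((s : Set R).Pairwise fun e f => e * f = 0) ∧ s.card = n}

/-!
Every vertex `(0,u)` is adjacent to all other vertices, so `Cl(R)` is connected of diameter at
most `2`; without non-trivial idempotents the remaining vertices are the `(1,u)`, and `(1,u)`,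
`(1,v)` are adjacent exactly when `uv = 1`. Hence two distinct vertices with equal first
coordinate are mutually maximally distant: for `(0,u)`, `(0,v)` because all their neighbours are
at distance `1` from each other, for `(1,u)`, `(1,v)` either because they are at the maximal
distance `2` or because `(1,v)` is the only neighbour of `(1,u)` of the form `(1,w)`. Conversely,
non-completeness yields for each unit `v` a unit `w ≠ v` with `vw ≠ 1`, so `(1,w)` is a neighbour
of `(0,u)` at distance `2` from `(1,v)`: no `(0,u)` is maximally distant from a `(1,v)`.
-/

section MaxDist

variable {G : SimpleGraph V} {u v w : V}

lemma isMaxDistFrom_of_adj (huv : G.Adj u v) (hN : ∀ w, G.Adj u w → w = v ∨ G.Adj v w) :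
    IsMaxDistFrom G u v := by
  intro w hw
  rw [SimpleGraph.dist_eq_one_iff_adj.2 huv]
  rcases hN w hw with rfl | hvw
  · simp
  · exact (SimpleGraph.dist_eq_one_iff_adj.2 hvw).le

lemma isMaxDistFrom_of_not_adj (hG : G.Connected) (hdiam : ∀ w, G.dist v w ≤ 2) (huv : u ≠ v)
    (hnadj : ¬G.Adj u v) : IsMaxDistFrom G u v :=
  fun w _ => (hdiam w).trans (hG.one_lt_dist_of_ne_of_not_adj huv hnadj)

lemma not_isMaxDistFrom_of_adj (hG : G.Connected) (huv : G.Adj u v) (huw : G.Adj u w)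
    (hvw : v ≠ w) (hnadj : ¬G.Adj v w) : ¬IsMaxDistFrom G u v := by
  intro h
  have hle := h w huw
  have hlt := hG.one_lt_dist_of_ne_of_not_adj hvw hnadj
  rw [SimpleGraph.dist_eq_one_iff_adj.2 huv] at hle
  omega

end MaxDist

lemma exists_ne_and_mul_ne_one {G : Type*} [Group G] {a b : G} (hab : a ≠ b) (hab' : a * b ≠ 1)
    (v : G) : ∃ w, w ≠ v ∧ v * w ≠ 1 := by
  by_contra! hv
  have hinv : ∀ w, w ≠ v → w = v⁻¹ := fun w hw => eq_inv_of_mul_eq_one_right (hv w hw)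
  by_cases ha : a = v
  · subst ha
    exact hab' (by rw [hinv b (Ne.symm hab), mul_inv_cancel])
  · by_cases hb : b = v
    · subst hb
      exact hab' (by rw [hinv a ha, inv_mul_cancel])
    · exact hab ((hinv a ha).trans (hinv b hb).symm)

section CleanGraph

variable {R : Type*} [CommRing R] {x y : CleanVtx R}

lemma cleanGraph_adj_of_fst_eq_zero (hx : (x.1 : R) = 0) (hxy : x ≠ y) :
    (cleanGraph R).Adj x y :=
  ⟨hxy, Or.inl (by rw [hx, zero_mul])⟩

lemma cleanGraph_dist_le_one_of_fst_eq_zero (hx : (x.1 : R) = 0) (y : CleanVtx R) :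
    (cleanGraph R).dist x y ≤ 1 := by
  by_cases hxy : x = y
  · simp [hxy]
  · exact (SimpleGraph.dist_eq_one_iff_adj.2 (cleanGraph_adj_of_fst_eq_zero hx hxy)).le

lemma cleanGraph_connected : (cleanGraph R).Connected := by
  refine (SimpleGraph.connected_iff_exists_forall_reachable _).2 ⟨(⟨0, .zero⟩, 1), fun y => ?_⟩
  by_cases hy : (⟨0, .zero⟩, 1) = y
  · exact hy ▸ .rfl
  · exact (cleanGraph_adj_of_fst_eq_zero rfl hy).reachable

lemma cleanGraph_dist_le_two (x y : CleanVtx R) : (cleanGraph R).dist x y ≤ 2 := by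
  let z : CleanVtx R := (⟨0, .zero⟩, 1)
  calc (cleanGraph R).dist x y ≤ (cleanGraph R).dist x z + (cleanGraph R).dist z y :=
        cleanGraph_connected.dist_triangle
    _ ≤ 1 + 1 := by
        rw [SimpleGraph.dist_comm (u := x)]
        gcongr <;> exact cleanGraph_dist_le_one_of_fst_eq_zero rfl _

lemma isMaxDistFrom_cleanGraph_of_fst_eq_zero (hxy : x ≠ y) (hy : (y.1 : R) = 0) :
    IsMaxDistFrom (cleanGraph R) x y := by
  refine isMaxDistFrom_of_adj (cleanGraph_adj_of_fst_eq_zero hy hxy.symm).symm fun w _ => ?_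
  by_cases hwy : w = y
  · exact .inl hwy
  · exact .inr (cleanGraph_adj_of_fst_eq_zero hy (Ne.symm hwy))

lemma isMMD_cleanGraph_of_fst_eq_zero (hxy : x ≠ y) (hx : (x.1 : R) = 0) (hy : (y.1 : R) = 0) :
    IsMMD (cleanGraph R) x y :=
  ⟨isMaxDistFrom_cleanGraph_of_fst_eq_zero hxy hy,
    isMaxDistFrom_cleanGraph_of_fst_eq_zero hxy.symm hx⟩

lemma nontrivial_of_cleanGraph_ne_top (hnc : cleanGraph R ≠ ⊤) : Nontrivial R := by
  by_contra h
  rw [not_nontrivial_iff_subsingleton] at h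
  exact hnc (Subsingleton.elim _ _)

variable [Nontrivial R]

lemma cleanGraph_adj_iff_of_fst_eq_one (hx : (x.1 : R) = 1) (hy : (y.1 : R) = 1) :
    (cleanGraph R).Adj x y ↔ x ≠ y ∧ x.2 * y.2 = 1 := by
  simp [cleanGraph, hx, hy, ← Units.val_mul]

lemma isMaxDistFrom_cleanGraph_of_fst_eq_one (hid : ∀ e : R, IsIdempotentElem e → e = 0 ∨ e = 1)
    (hxy : x ≠ y) (hx : (x.1 : R) = 1) (hy : (y.1 : R) = 1) :
    IsMaxDistFrom (cleanGraph R) x y := by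
  by_cases hadj : (cleanGraph R).Adj x y
  · refine isMaxDistFrom_of_adj hadj fun w hxw => ?_
    rcases hid w.1 w.1.2 with hw | hw
    · refine .inr (cleanGraph_adj_of_fst_eq_zero hw fun hwy => ?_).symm
      rw [hwy, hy] at hw
      exact one_ne_zero hw
    · have hxw := ((cleanGraph_adj_iff_of_fst_eq_one hx hw).1 hxw).2
      have hxy' := ((cleanGraph_adj_iff_of_fst_eq_one hx hy).1 hadj).2
      exact .inl (Prod.ext (Subtype.ext (hw.trans hy.symm))
        (mul_left_cancel (hxw.trans hxy'.symm)))
  · exact isMaxDistFrom_of_not_adj cleanGraph_connected (cleanGraph_dist_le_two y) hxy hadj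

lemma isMMD_cleanGraph_of_fst_eq_one (hid : ∀ e : R, IsIdempotentElem e → e = 0 ∨ e = 1)
    (hxy : x ≠ y) (hx : (x.1 : R) = 1) (hy : (y.1 : R) = 1) : IsMMD (cleanGraph R) x y :=
  ⟨isMaxDistFrom_cleanGraph_of_fst_eq_one hid hxy hx hy,
    isMaxDistFrom_cleanGraph_of_fst_eq_one hid hxy.symm hy hx⟩

lemma exists_units_ne_and_mul_ne_one (hid : ∀ e : R, IsIdempotentElem e → e = 0 ∨ e = 1)
    (hnc : cleanGraph R ≠ ⊤) : ∃ a b : Rˣ, a ≠ b ∧ a * b ≠ 1 := by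
  by_contra! h
  refine hnc (SimpleGraph.ext (funext₂ fun x y => propext ⟨SimpleGraph.Adj.ne, fun hxy => ?_⟩))
  rcases hid x.1 x.1.2 with hx | hx
  · exact cleanGraph_adj_of_fst_eq_zero hx hxy
  rcases hid y.1 y.1.2 with hy | hy
  · exact (cleanGraph_adj_of_fst_eq_zero hy (Ne.symm hxy)).symm
  refine (cleanGraph_adj_iff_of_fst_eq_one hx hy).2 ⟨hxy, h _ _ fun h2 => hxy ?_⟩
  exact Prod.ext (Subtype.ext (hx.trans hy.symm)) h2

lemma not_isMaxDistFrom_cleanGraph (hx : (x.1 : R) = 0) (hy : (y.1 : R) = 1) {w : Rˣ}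
    (hw : w ≠ y.2) (hyw : y.2 * w ≠ 1) : ¬IsMaxDistFrom (cleanGraph R) x y := by
  have hxy : x ≠ y := fun h => zero_ne_one (hx.symm.trans (h ▸ hy))
  have hyw' : y ≠ (y.1, w) := fun h => hw (congrArg Prod.snd h).symm
  refine not_isMaxDistFrom_of_adj cleanGraph_connected (cleanGraph_adj_of_fst_eq_zero hx hxy)
    (cleanGraph_adj_of_fst_eq_zero hx fun h => ?_) hyw' fun hadj => ?_
  · exact zero_ne_one (hx.symm.trans (h ▸ hy))
  · exact hyw ((cleanGraph_adj_iff_of_fst_eq_one (y := (y.1, w)) hy hy).1 hadj).2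

end CleanGraph

theorem statement_5_general (R : Type*) [CommRing R]
    (hid : ∀ e : R, IsIdempotentElem e → e = 0 ∨ e = 1)
    (hnc : cleanGraph R ≠ ⊤) :
    (∀ x : CleanVtx R, x ∈ graphBoundary (cleanGraph R)) ∧
    (∀ x y : CleanVtx R, x ≠ y →
      ((srGraph (cleanGraph R)).Adj x y ↔
        ((x.1 : R) = 0 ∧ (y.1 : R) = 0) ∨ ((x.1 : R) = 1 ∧ (y.1 : R) = 1))) := by
  have := nontrivial_of_cleanGraph_ne_top hnc
  obtain ⟨a, b, hab, hab'⟩ := exists_units_ne_and_mul_ne_one hid hnc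
  have hfar := exists_ne_and_mul_ne_one hab hab'
  refine ⟨fun x => ?_, fun x y hxy => ⟨?_, ?_⟩⟩
  · obtain ⟨w, hw, -⟩ := hfar x.2
    have hxw : x ≠ (x.1, w) := fun h => hw (congrArg Prod.snd h).symm
    refine ⟨(x.1, w), hxw, ?_⟩
    rcases hid x.1 x.1.2 with hx | hx
    · exact isMMD_cleanGraph_of_fst_eq_zero hxw hx hx
    · exact isMMD_cleanGraph_of_fst_eq_one hid hxw hx hx
  · rintro ⟨-, hxy_max, hyx_max⟩
    obtain ⟨w, hw, hyw⟩ := hfar y.2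
    obtain ⟨w', hw', hxw'⟩ := hfar x.2
    rcases hid x.1 x.1.2 with hx | hx <;> rcases hid y.1 y.1.2 with hy | hy
    · exact .inl ⟨hx, hy⟩
    · exact absurd hxy_max (not_isMaxDistFrom_cleanGraph hx hy hw hyw)
    · exact absurd hyx_max (not_isMaxDistFrom_cleanGraph hy hx hw' hxw')
    · exact .inr ⟨hx, hy⟩
  · rintro (⟨hx, hy⟩ | ⟨hx, hy⟩)
    · exact ⟨hxy, isMMD_cleanGraph_of_fst_eq_zero hxy hx hy⟩
    · exact ⟨hxy, isMMD_cleanGraph_of_fst_eq_one hid hxy hx hy⟩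

theorem statement_5 (R : Type*) [CommRing R] [Nontrivial R]
    (hid : ∀ e : R, IsIdempotentElem e → e = 0 ∨ e = 1)
    (hnc : cleanGraph R ≠ ⊤) :
    (∀ x : CleanVtx R, x ∈ graphBoundary (cleanGraph R)) ∧
    (∀ x y : CleanVtx R, x ≠ y →
      ((srGraph (cleanGraph R)).Adj x y ↔
        ((x.1 : R) = 0 ∧ (y.1 : R) = 0) ∨ ((x.1 : R) = 1 ∧ (y.1 : R) = 1))) :=
  statement_5_general R hid hnc
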